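/- arXiv:2510.26133 — 2 statements merged into one kernel-verified Lean document; each statement's English description precedes it below -/
import Mathlib

section
/- Let m, n ≥ 1 and define v_n(z) = n(1 + z + ⋯ + z^{m-1}) + (n+1)(z^m + z^{m+1} + ⋯ + z^{m+n-1}). Then D_{σ,m-1}(v_n) = (n+1)² binom(m+n, m) - 2n - 1. -/
/-!
Since `n² = (n+1)² - (2n+1)`, the sum equals
`(n+1)² ∑_{k<m+n} C(k,m-1) - (2n+1) ∑_{k<m} C(k,m-1)`,
and the hockey-stick identity evaluates the two sums to `C(m+n,m)` and `C(m,m) = 1`.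
-/

open Finset

theorem Nat.sum_range_choose_eq_choose_succ (N j : ℕ) :
    ∑ k ∈ range N, k.choose j = N.choose (j + 1) := by
  induction N with
  | zero => simp
  | succ N ih => rw [sum_range_succ, ih, Nat.choose_succ_succ', add_comm]

theorem stmt3_general (m n : ℕ) (hm : 1 ≤ m) :
    (∑ k ∈ Finset.range (m + n),
        (k.choose (m - 1) : ℝ) * (if k < m then (n : ℝ) else (n : ℝ) + 1) ^ 2) =
      ((n : ℝ) + 1) ^ 2 * ((m + n).choose m : ℝ) - 2 * n - 1 := by
  obtain ⟨j, rfl⟩ : ∃ j, m = j + 1 := ⟨m - 1, by omega⟩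
  have hweight : ∀ k, (k.choose j : ℝ) * (if k < j + 1 then (n : ℝ) else n + 1) ^ 2 =
      (n + 1) ^ 2 * k.choose j - (2 * n + 1) * (if k < j + 1 then (k.choose j : ℝ) else 0) := by
    intro k
    split_ifs <;> ring
  have hfilter : (range (j + 1 + n)).filter (· < j + 1) = range (j + 1) := by
    ext k
    simp only [mem_filter, mem_range]
    omega
  have hhockey (N : ℕ) : ∑ k ∈ range N, (k.choose j : ℝ) = N.choose (j + 1) := by
    exact_mod_cast Nat.sum_range_choose_eq_choose_succ N j
  simp only [add_tsub_cancel_right, hweight, sum_sub_distrib, ← mul_sum, ← sum_filter, hfilter,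
    hhockey, Nat.choose_self, Nat.cast_one]
  ring

/-- For `vₙ(z) = n(1 + z + ⋯ + z^{m-1}) + (n+1)(z^m + ⋯ + z^{m+n-1})`,
one has `D_{σ,m-1}(vₙ) = (n+1)² C(m+n, m) - 2n - 1`. -/
theorem stmt3 (m n : ℕ) (hm : 1 ≤ m) (hn : 1 ≤ n) :
    (∑ k ∈ Finset.range (m + n),
        (k.choose (m - 1) : ℝ) * (if k < m then (n : ℝ) else (n : ℝ) + 1) ^ 2) =
      ((n : ℝ) + 1) ^ 2 * ((m + n).choose m : ℝ) - 2 * n - 1 :=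
  stmt3_general m n hm
end

section
/- Let m, n ∈ ℕ with m ≥ 1, λ ∈ 𝕋, and let q(z) = Σ_{k=m+1}^{n+m+1} c_k z^k be a polynomial. Then D_{λ,m}(q) ≤ (n+1) binom(n+m+1, m) D_{σ,m}(q), where D_{σ,m}(q) = Σ_{k=m+1}^{n+m+1} |c_k|² binom(k,m). -/
/-!
On the unit disc `|q⁽ᵐ⁾(z)| ≤ S := ∑ₖ |cₖ| k!/(k-m)!`, so `D_{λ,m}(q)` is at most `S²` times the
weighted area `∫_𝔻 (1 - |z|²)ᵐ / |z - λ|² dA`, up to the normalising constant. On the circle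
`|z| = r < 1` the kernel `(1 - r²) / |z - λ|²` is the real part of the holomorphic function
`(λ + z) / (λ - z)`, whose circle average is its value `1` at the centre; in polar coordinates the
weighted area is therefore `2π ∫₀¹ r (1 - r²)ᵐ⁻¹ dr = π / m`. Finally Cauchy–Schwarz over the
`n + 1` coefficients together with `k!/(k-m)! = m! C(k,m) ≤ m! C(n+m+1,m)` bounds `S² / m!²`.
-/

open MeasureTheory Metric Filter
open scoped ENNReal

/-- The local Dirichlet integral of order `m` at `λ ∈ 𝕋`. -/
noncomputable def Dlam (lam : ℂ) (m : ℕ) (f : ℂ → ℂ) : ℝ≥0∞ :=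
  ENNReal.ofReal (1 / (m.factorial * (m - 1).factorial * Real.pi)) *
    ∫⁻ z in ball (0 : ℂ) 1,
      ENNReal.ofReal ((1 - ‖z‖ ^ 2) / ‖z - lam‖ ^ 2) *
        ENNReal.ofReal (‖iteratedDeriv m f z‖ ^ 2 * (1 - ‖z‖ ^ 2) ^ (m - 1))

open Set Real

lemma iteratedDeriv_sum_monomial (m : ℕ) (s : Finset ℕ) (c : ℕ → ℂ) (z : ℂ) :
    iteratedDeriv m (fun z => ∑ k ∈ s, c k * z ^ k) z =
      ∑ k ∈ s, c k * (k.descFactorial m * z ^ (k - m)) := by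
  rw [iteratedDeriv_fun_sum fun k _ => by fun_prop]
  simp only [iteratedDeriv_const_mul_field, iteratedDeriv_pow]

lemma norm_iteratedDeriv_sum_monomial_le (m : ℕ) (s : Finset ℕ) (c : ℕ → ℂ) {z : ℂ}
    (hz : ‖z‖ ≤ 1) :
    ‖iteratedDeriv m (fun z => ∑ k ∈ s, c k * z ^ k) z‖ ≤ ∑ k ∈ s, ‖c k‖ * k.descFactorial m := by
  rw [iteratedDeriv_sum_monomial]
  refine (norm_sum_le _ _).trans (Finset.sum_le_sum fun k _ => ?_)
  rw [norm_mul, norm_mul, norm_pow, Complex.norm_natCast]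
  gcongr
  exact mul_le_of_le_one_right (by positivity) (pow_le_one₀ (norm_nonneg z) hz)

lemma Complex.polarCoord_symm_eq_circleMap (p : ℝ × ℝ) :
    Complex.polarCoord.symm p = circleMap 0 p.1 p.2 := by
  simp [circleMap, Complex.exp_mul_I]

theorem lintegral_ball_eq_lintegral_circleMap {g : ℂ → ℝ≥0∞} (hg : Measurable g) (R : ℝ) :
    ∫⁻ z in ball (0 : ℂ) R, g z =
      ∫⁻ r in Ioo 0 R, ENNReal.ofReal r * ∫⁻ θ in Ioo (-π) π, g (circleMap 0 r θ) := by
  have hcircle : Continuous fun p : ℝ × ℝ => circleMap 0 p.1 p.2 := by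
    simp only [circleMap]; fun_prop
  have hmeas : Measurable fun p : ℝ × ℝ =>
      ENNReal.ofReal p.1 • (ball (0 : ℂ) R).indicator g (circleMap 0 p.1 p.2) :=
    measurable_fst.ennreal_ofReal.smul ((hg.indicator measurableSet_ball).comp hcircle.measurable)
  have hradial : ∀ r ∈ Ioi (0 : ℝ),
      ∫⁻ θ in Ioo (-π) π, ENNReal.ofReal r • (ball (0 : ℂ) R).indicator g (circleMap 0 r θ) =
      (Iio R).indicator
        (fun r => ENNReal.ofReal r * ∫⁻ θ in Ioo (-π) π, g (circleMap 0 r θ)) r := by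
    intro r (hr : 0 < r)
    have hmem : ∀ θ, circleMap 0 r θ ∈ ball (0 : ℂ) R ↔ r ∈ Iio R := fun θ => by
      simp [abs_of_pos hr]
    by_cases hrR : r ∈ Iio R
    · simp [indicator_of_mem, hmem, hrR, lintegral_const_mul' _ _ ENNReal.ofReal_ne_top]
    · simp [indicator_of_notMem, hmem, hrR]
  rw [← lintegral_indicator measurableSet_ball, ← Complex.lintegral_comp_polarCoord_symm,
    polarCoord_target, Measure.volume_eq_prod, ← Measure.prod_restrict]
  simp only [Complex.polarCoord_symm_eq_circleMap]
  rw [lintegral_prod _ hmeas.aemeasurable, setLIntegral_congr_fun measurableSet_Ioi hradial,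
    lintegral_indicator measurableSet_Iio, Measure.restrict_restrict measurableSet_Iio, Iio_inter_Ioi]

/- The pole `w` lies outside the circle: the average is the value at `0` of the Herglotz–Riesz
kernel `z ↦ (w + z) / (w - z)`, holomorphic on `|z| ≤ |r|`, by the mean value property. -/
theorem circleAverage_poissonKernel_of_abs_lt_norm {w : ℂ} {r : ℝ} (hr : |r| < ‖w‖) :
    circleAverage (fun z => poissonKernel 0 z w) 0 r = 1 := by
  have hsub : ∀ z ∈ closedBall (0 : ℂ) |r|, w - z ≠ 0 := fun z hz => by
    rw [sub_ne_zero]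
    rintro rfl
    exact hr.not_ge (mem_closedBall_zero_iff.mp hz)
  have hdiff : DifferentiableOn ℂ (fun z => herglotzRieszKernel 0 z w) (closedBall 0 |r|) := by
    simp only [herglotzRieszKernel, sub_zero]
    exact (differentiableOn_const w |>.add differentiableOn_id).div
      (differentiableOn_const w |>.sub differentiableOn_id) hsub
  have hmean : circleAverage (fun z => herglotzRieszKernel 0 z w) 0 r = 1 := by
    rw [(hdiff.mono closure_ball_subset_closedBall).diffContOnCl.circleAverage]
    simp [herglotzRieszKernel, div_self (norm_pos_iff.mp ((abs_nonneg r).trans_lt hr))]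
  have hint : CircleIntegrable (fun z => herglotzRieszKernel 0 z w) 0 r :=
    (hdiff.continuousOn.mono sphere_subset_closedBall).circleIntegrable'
  calc circleAverage (fun z => poissonKernel 0 z w) 0 r
      = circleAverage (Complex.reCLM ∘ fun z => herglotzRieszKernel 0 z w) 0 r := by
        congr 1
        ext z
        exact congrFun poissonKernel_eq_re_herglotzRieszKernel w
    _ = 1 := by
        rw [Complex.reCLM.circleAverage_comp_comm hint, hmean, Complex.reCLM_apply, Complex.one_re]

theorem lintegral_Ioo_circleMap_eq_ofReal_circleAverage {f : ℂ → ℝ} {r : ℝ}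
    (hf : ContinuousOn f (sphere 0 |r|)) (hf0 : ∀ z ∈ sphere (0 : ℂ) |r|, 0 ≤ f z) :
    ∫⁻ θ in Ioo (-π) π, ENNReal.ofReal (f (circleMap 0 r θ)) =
      ENNReal.ofReal (2 * π * circleAverage f 0 r) := by
  have hcont : Continuous fun θ => f (circleMap 0 r θ) :=
    hf.comp_continuous (continuous_circleMap 0 r) (circleMap_mem_sphere' 0 r)
  rw [← ofReal_integral_eq_lintegral_ofReal
    (hcont.integrableOn_Icc.mono_set Ioo_subset_Icc_self)
    (Eventually.of_forall fun θ => hf0 _ (circleMap_mem_sphere' 0 r θ)),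
    circleAverage_eq_integral_add (-π), intervalIntegral.integral_comp_add_right
      (fun θ => f (circleMap 0 r θ)), smul_eq_mul, ← mul_assoc,
    mul_inv_cancel₀ (by positivity), one_mul, zero_add, ← sub_eq_add_neg,
    two_mul, add_sub_cancel_right, intervalIntegral.integral_of_le (by linarith [pi_pos]),
    integral_Ioc_eq_integral_Ioo]

theorem integral_mul_one_sub_sq_pow (k : ℕ) :
    ∫ r in (0 : ℝ)..1, r * (1 - r ^ 2) ^ k = 1 / (2 * ((k : ℝ) + 1)) := by
  have hderiv : ∀ x ∈ uIcc (0 : ℝ) 1,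
      HasDerivAt (fun r : ℝ => -(1 - r ^ 2) ^ (k + 1) / (2 * (k + 1))) (x * (1 - x ^ 2) ^ k) x :=
    fun x _ => by
      refine ((((hasDerivAt_pow 2 x).const_sub 1).fun_pow (k + 1)).fun_neg.div_const
        (2 * (k + 1 : ℝ))).congr_deriv ?_
      push_cast
      field_simp
  rw [intervalIntegral.integral_eq_sub_of_hasDerivAt hderiv
    (Continuous.intervalIntegrable (by fun_prop) 0 1)]
  field_simp
  ring

theorem lintegral_circleMap_one_sub_sq_pow_mul_poisson {lam : ℂ} (hlam : ‖lam‖ = 1) (k : ℕ)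
    {r : ℝ} (hr0 : 0 < r) (hr1 : r < 1) :
    ∫⁻ θ in Ioo (-π) π, ENNReal.ofReal ((1 - ‖circleMap 0 r θ‖ ^ 2) ^ k *
      ((1 - ‖circleMap 0 r θ‖ ^ 2) / ‖circleMap 0 r θ - lam‖ ^ 2)) =
      ENNReal.ofReal (2 * π * (1 - r ^ 2) ^ k) := by
  set f : ℂ → ℝ := fun z => (1 - ‖z‖ ^ 2) ^ k * ((1 - ‖z‖ ^ 2) / ‖z - lam‖ ^ 2)
  have hnorm : ∀ z ∈ sphere (0 : ℂ) |r|, ‖z‖ = r := fun z hz => by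
    rwa [mem_sphere_zero_iff_norm, abs_of_pos hr0] at hz
  have hsphere : EqOn f (fun z => (1 - r ^ 2) ^ k • poissonKernel 0 z lam) (sphere 0 |r|) :=
    fun z hz => by
      simp only [f, poissonKernel, sub_zero, hlam, hnorm z hz, norm_sub_rev lam, one_pow,
        smul_eq_mul]
  have hcont : ContinuousOn f (sphere 0 |r|) := by
    refine ContinuousOn.mul (by fun_prop) (ContinuousOn.div (by fun_prop) (by fun_prop) ?_)
    intro z hz
    rw [← norm_sub_rev, ne_eq, pow_eq_zero_iff two_ne_zero, norm_eq_zero, sub_eq_zero]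
    rintro rfl
    linarith [hnorm _ hz]
  have hnonneg : ∀ z ∈ sphere (0 : ℂ) |r|, 0 ≤ f z := fun z hz => by
    have : 0 ≤ 1 - ‖z‖ ^ 2 := by nlinarith [hnorm z hz]
    positivity
  rw [lintegral_Ioo_circleMap_eq_ofReal_circleAverage hcont hnonneg,
    circleAverage_congr_sphere hsphere, circleAverage_fun_smul,
    circleAverage_poissonKernel_of_abs_lt_norm (by rwa [hlam, abs_of_pos hr0]), smul_eq_mul,
    mul_one]

theorem lintegral_ball_one_sub_sq_pow_mul_poisson {lam : ℂ} (hlam : ‖lam‖ = 1) (k : ℕ) :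
    ∫⁻ z in ball (0 : ℂ) 1, ENNReal.ofReal ((1 - ‖z‖ ^ 2) ^ k * ((1 - ‖z‖ ^ 2) / ‖z - lam‖ ^ 2)) =
      ENNReal.ofReal (π / (k + 1)) := by
  have hradial : ∀ r ∈ Ioo (0 : ℝ) 1, ENNReal.ofReal r *
      ∫⁻ θ in Ioo (-π) π, ENNReal.ofReal ((1 - ‖circleMap 0 r θ‖ ^ 2) ^ k *
        ((1 - ‖circleMap 0 r θ‖ ^ 2) / ‖circleMap 0 r θ - lam‖ ^ 2)) =
      ENNReal.ofReal (2 * π * (r * (1 - r ^ 2) ^ k)) := fun r ⟨hr0, hr1⟩ => by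
    rw [lintegral_circleMap_one_sub_sq_pow_mul_poisson hlam k hr0 hr1,
      ← ENNReal.ofReal_mul hr0.le]
    ring_nf
  have hradial_nonneg : ∀ r ∈ Ioo (0 : ℝ) 1, 0 ≤ 2 * π * (r * (1 - r ^ 2) ^ k) :=
    fun r ⟨hr0, hr1⟩ => by
      have : 0 ≤ 1 - r ^ 2 := by nlinarith
      positivity
  calc _ = ∫⁻ r in Ioo 0 1, ENNReal.ofReal (2 * π * (r * (1 - r ^ 2) ^ k)) := by
        rw [lintegral_ball_eq_lintegral_circleMap (by fun_prop)]
        exact setLIntegral_congr_fun measurableSet_Ioo hradial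
    _ = ENNReal.ofReal (2 * π * ∫ r in (0 : ℝ)..1, r * (1 - r ^ 2) ^ k) := by
        rw [← ofReal_integral_eq_lintegral_ofReal
          ((Continuous.integrableOn_Icc (by fun_prop)).mono_set Ioo_subset_Icc_self)
          (ae_restrict_of_forall_mem measurableSet_Ioo hradial_nonneg),
          ← intervalIntegral.integral_const_mul, intervalIntegral.integral_of_le zero_le_one,
          integral_Ioc_eq_integral_Ioo]
    _ = ENNReal.ofReal (π / (k + 1)) := by
        rw [integral_mul_one_sub_sq_pow]
        congr 1
        field_simp

theorem Dlam_le_of_norm_iteratedDeriv_le {lam : ℂ} (hlam : ‖lam‖ = 1) {m : ℕ} (hm : 1 ≤ m)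
    {f : ℂ → ℂ} {S : ℝ} (hf : ∀ z ∈ ball (0 : ℂ) 1, ‖iteratedDeriv m f z‖ ≤ S) :
    Dlam lam m f ≤ ENNReal.ofReal (S ^ 2 / (m.factorial : ℝ) ^ 2) := by
  obtain ⟨k, rfl⟩ : ∃ k, m = k + 1 := ⟨m - 1, by omega⟩
  have hpoint : ∀ z ∈ ball (0 : ℂ) 1,
      ENNReal.ofReal ((1 - ‖z‖ ^ 2) / ‖z - lam‖ ^ 2) *
        ENNReal.ofReal (‖iteratedDeriv (k + 1) f z‖ ^ 2 * (1 - ‖z‖ ^ 2) ^ (k + 1 - 1)) ≤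
      ENNReal.ofReal (S ^ 2) *
        ENNReal.ofReal ((1 - ‖z‖ ^ 2) ^ k * ((1 - ‖z‖ ^ 2) / ‖z - lam‖ ^ 2)) := by
    intro z hz
    have : 0 ≤ 1 - ‖z‖ ^ 2 := by nlinarith [mem_ball_zero_iff.mp hz, norm_nonneg z]
    rw [← ENNReal.ofReal_mul (by positivity), ← ENNReal.ofReal_mul (by positivity)]
    refine ENNReal.ofReal_le_ofReal ?_
    rw [Nat.add_sub_cancel]
    have := pow_le_pow_left₀ (norm_nonneg _) (hf z hz) 2
    calc _ = ‖iteratedDeriv (k + 1) f z‖ ^ 2 *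
            ((1 - ‖z‖ ^ 2) ^ k * ((1 - ‖z‖ ^ 2) / ‖z - lam‖ ^ 2)) := by ring
      _ ≤ _ := by gcongr
  calc Dlam lam (k + 1) f
      ≤ ENNReal.ofReal (1 / ((k + 1).factorial * (k + 1 - 1).factorial * π)) *
          ∫⁻ z in ball (0 : ℂ) 1, ENNReal.ofReal (S ^ 2) *
            ENNReal.ofReal ((1 - ‖z‖ ^ 2) ^ k * ((1 - ‖z‖ ^ 2) / ‖z - lam‖ ^ 2)) := by
        unfold Dlam
        exact mul_le_mul_right (setLIntegral_mono (by fun_prop) hpoint) _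
    _ = ENNReal.ofReal (1 / ((k + 1).factorial * k.factorial * π)) *
          (ENNReal.ofReal (S ^ 2) * ENNReal.ofReal (π / (k + 1))) := by
        rw [lintegral_const_mul' _ _ ENNReal.ofReal_ne_top,
          lintegral_ball_one_sub_sq_pow_mul_poisson hlam, Nat.add_sub_cancel]
    _ = ENNReal.ofReal (S ^ 2 / ((k + 1).factorial : ℝ) ^ 2) := by
        rw [← ENNReal.ofReal_mul (by positivity), ← ENNReal.ofReal_mul (by positivity)]
        congr 1
        rw [Nat.factorial_succ]
        push_cast
        field_simp

theorem sq_sum_mul_descFactorial_le {s : Finset ℕ} {N : ℕ} (hs : ∀ k ∈ s, k ≤ N) (m : ℕ)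
    (a : ℕ → ℝ) :
    (∑ k ∈ s, a k * k.descFactorial m) ^ 2 ≤
      s.card * (m.factorial : ℝ) ^ 2 * N.choose m * ∑ k ∈ s, a k ^ 2 * k.choose m := by
  calc (∑ k ∈ s, a k * k.descFactorial m) ^ 2
      ≤ s.card * ∑ k ∈ s, (a k * k.descFactorial m) ^ 2 := sq_sum_le_card_mul_sum_sq
    _ = s.card * (m.factorial : ℝ) ^ 2 * ∑ k ∈ s, (k.choose m : ℝ) * (a k ^ 2 * k.choose m) := by
        rw [Finset.mul_sum, Finset.mul_sum]
        refine Finset.sum_congr rfl fun k _ => ?_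
        rw [Nat.descFactorial_eq_factorial_mul_choose]
        push_cast
        ring
    _ ≤ s.card * (m.factorial : ℝ) ^ 2 * ∑ k ∈ s, (N.choose m : ℝ) * (a k ^ 2 * k.choose m) := by
        gcongr with k hk
        exact hs k hk
    _ = _ := by rw [← Finset.mul_sum]; ring

/-- For a polynomial `q(z) = Σ_{k=m+1}^{n+m+1} cₖ zᵏ` and `λ ∈ 𝕋`,
`D_{λ,m}(q) ≤ (n+1) C(n+m+1, m) D_{σ,m}(q)` where
`D_{σ,m}(q) = Σ_{k=m+1}^{n+m+1} |cₖ|² C(k,m)`. -/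
theorem stmt10 (m n : ℕ) (hm : 1 ≤ m) (lam : ℂ) (hlam : ‖lam‖ = 1) (c : ℕ → ℂ) :
    Dlam lam m (fun z => ∑ k ∈ Finset.Icc (m + 1) (n + m + 1), c k * z ^ k) ≤
      ((n : ℝ≥0∞) + 1) * ((n + m + 1).choose m : ℝ≥0∞) *
        ENNReal.ofReal (∑ k ∈ Finset.Icc (m + 1) (n + m + 1), ‖c k‖ ^ 2 * (k.choose m : ℝ)) := by
  set s := Finset.Icc (m + 1) (n + m + 1)
  have hcard : (s.card : ℝ) = n + 1 := by
    rw [Nat.card_Icc, show n + m + 1 + 1 - (m + 1) = n + 1 by omega]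
    push_cast; ring
  have hsq := sq_sum_mul_descFactorial_le (s := s) (fun k hk => (Finset.mem_Icc.mp hk).2) m (‖c ·‖)
  rw [hcard] at hsq
  refine (Dlam_le_of_norm_iteratedDeriv_le hlam hm fun z hz =>
    norm_iteratedDeriv_sum_monomial_le m s c (mem_ball_zero_iff.mp hz).le).trans ?_
  calc _ ≤ ENNReal.ofReal
        ((n + 1) * ((n + m + 1).choose m) * ∑ k ∈ s, ‖c k‖ ^ 2 * k.choose m) := by
        refine ENNReal.ofReal_le_ofReal ?_
        rw [div_le_iff₀ (by positivity)]
        linarith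
    _ = _ := by
        rw [ENNReal.ofReal_mul (by positivity), ENNReal.ofReal_mul (by positivity)]
        norm_cast
end
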